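/- arXiv:2311.00521 — 3 statements merged into one kernel-verified Lean document; each statement's English description precedes it below -/
import Mathlib

section
/- Let d ≥ 1, L > 0, σ > 0 and let f : ℝ^d → ℝ be L-smooth. Then the Gaussian smoothing f_σ is L-smooth, i.e. f_σ is differentiable and ‖∇f_σ(x) − ∇f_σ(y)‖ ≤ L‖x − y‖ for all x, y ∈ ℝ^d. -/
open MeasureTheory
open scoped Classical

/-- Gaussian smoothing of `f : ℝ^d → ℝ` with radius `σ`:
`f_σ(x) = π^(−d/2) ∫ f(x + σu) e^(−‖u‖²) du`, with `f_0 = f`. -/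
noncomputable def gsmooth {d : ℕ} (f : EuclideanSpace ℝ (Fin d) → ℝ) (σ : ℝ)
    (x : EuclideanSpace ℝ (Fin d)) : ℝ :=
  if σ = 0 then f x
  else Real.pi ^ (-(d : ℝ) / 2) *
    ∫ u : EuclideanSpace ℝ (Fin d), f (x + σ • u) * Real.exp (-‖u‖ ^ 2)

/-!
Write `f_σ(x) = ∫ w(u) f(x + σu) du` with the normalised Gaussian density `w`, which has total
mass one and a finite second moment. As `∇f` is `L`-Lipschitz, `f` grows at most quadratically and
`∇f` at most linearly, so both integrands are dominated by integrable functions locally uniformly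
in `x`, and one may differentiate under the integral: `∇f_σ(x) = ∫ w(u) ∇f(x + σu) du`. Hence
`‖∇f_σ(x) - ∇f_σ(y)‖ ≤ ∫ w(u) ‖∇f(x + σu) - ∇f(y + σu)‖ du ≤ L ‖x - y‖`.
-/

open Real Metric Module InnerProductSpace
open scoped NNReal

section LipschitzDerivative

variable {E F : Type*} [NormedAddCommGroup E] [NormedAddCommGroup F] {K : ℝ≥0}

theorem LipschitzWith.norm_le_add_mul_norm_sub {g : E → F} (hg : LipschitzWith K g) (x z : E) :
    ‖g z‖ ≤ ‖g x‖ + K * ‖z - x‖ :=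
  (norm_le_norm_add_norm_sub' (g z) (g x)).trans (add_le_add_right (hg.norm_sub_le z x) _)

variable [NormedSpace ℝ E] [NormedSpace ℝ F] {f : E → F}

theorem norm_sub_le_of_lipschitzWith_fderiv (hf : Differentiable ℝ f)
    (hf' : LipschitzWith K (fderiv ℝ f)) (x z : E) :
    ‖f z - f x‖ ≤ (‖fderiv ℝ f x‖ + K * ‖z - x‖) * ‖z - x‖ :=
  (convex_closedBall x ‖z - x‖).norm_image_sub_le_of_norm_fderiv_le (fun p _ ↦ hf p)
    (fun p hp ↦ (hf'.norm_le_add_mul_norm_sub x p).trans <| by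
      rw [mem_closedBall, dist_eq_norm] at hp; gcongr)
    (mem_closedBall_self (norm_nonneg _)) (by rw [mem_closedBall, dist_eq_norm])

theorem norm_smul_comp_add_le (hf : Differentiable ℝ f) (hf' : LipschitzWith K (fderiv ℝ f))
    (x y : E) (a : ℝ) :
    ‖a • f (x + y)‖ ≤ ‖f x‖ * ‖a‖ + ‖fderiv ℝ f x‖ * ‖‖y‖ * a‖ + K * ‖‖y‖ ^ 2 * a‖ := by
  have hgrowth := norm_sub_le_of_lipschitzWith_fderiv hf hf' x (x + y)
  rw [add_sub_cancel_left] at hgrowth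
  have hfy : ‖f (x + y)‖ ≤ ‖f x‖ + (‖fderiv ℝ f x‖ + K * ‖y‖) * ‖y‖ :=
    (norm_le_norm_add_norm_sub' _ _).trans (add_le_add_right hgrowth _)
  simp only [norm_smul, norm_mul, norm_pow, norm_norm]
  nlinarith [norm_nonneg a]

theorem norm_smul_fderiv_comp_add_le (hf' : LipschitzWith K (fderiv ℝ f)) {x₀ x : E}
    (hx : ‖x - x₀‖ ≤ 1) (y : E) (a : ℝ) :
    ‖a • fderiv ℝ f (x + y)‖ ≤ (‖fderiv ℝ f x₀‖ + K) * ‖a‖ + K * ‖‖y‖ * a‖ := by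
  have hdist : ‖x + y - x₀‖ ≤ 1 + ‖y‖ :=
    (norm_add_le_of_le hx le_rfl).trans_eq' (by rw [add_sub_right_comm])
  have hDf := (hf'.norm_le_add_mul_norm_sub x₀ (x + y)).trans (by gcongr : _ ≤ _ + K * (1 + ‖y‖))
  simp only [norm_smul, norm_mul, norm_norm]
  nlinarith [norm_nonneg a]

end LipschitzDerivative

section WeightedAverage

variable {E α : Type*} [NormedAddCommGroup E] [MeasurableSpace α] {μ : Measure α} {v : α → E}
  {w : α → ℝ}

theorem integrable_norm_mul_of_integrable_sq_norm_mul (hv : AEStronglyMeasurable v μ)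
    (hw : Integrable w μ) (hv₂ : Integrable (fun u ↦ ‖v u‖ ^ 2 * w u) μ) :
    Integrable (fun u ↦ ‖v u‖ * w u) μ := by
  refine (hw.norm.add hv₂.norm).mono' (hv.norm.mul hw.aestronglyMeasurable)
    (ae_of_all _ fun u ↦ ?_)
  simp only [Pi.add_apply, norm_mul, norm_pow, norm_norm]
  -- `t ≤ 1 + t ^ 2` for every real `t`
  nlinarith [norm_nonneg (w u), sq_nonneg (‖v u‖ - 1)]

variable {F : Type*} [NormedSpace ℝ E] [NormedAddCommGroup F] [NormedSpace ℝ F] {f : E → F}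
  {K : ℝ≥0} (hf : Differentiable ℝ f) (hf' : LipschitzWith K (fderiv ℝ f))
  (hv : AEStronglyMeasurable v μ) (hw : Integrable w μ)
  (hv₂ : Integrable (fun u ↦ ‖v u‖ ^ 2 * w u) μ)
include hf' hv hw hv₂

include hf in
theorem integrable_smul_comp_add (x : E) : Integrable (fun u ↦ w u • f (x + v u)) μ :=
  (((hw.norm.const_mul _).add
      ((integrable_norm_mul_of_integrable_sq_norm_mul hv hw hv₂).norm.const_mul _)).add
      (hv₂.norm.const_mul _)).mono'
    (hw.aestronglyMeasurable.smul (hf.continuous.comp_aestronglyMeasurable (hv.const_add x)))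
    (ae_of_all _ fun u ↦ norm_smul_comp_add_le hf hf' x (v u) (w u))

theorem integrable_smul_fderiv_comp_add (x : E) :
    Integrable (fun u ↦ w u • fderiv ℝ f (x + v u)) μ :=
  ((hw.norm.const_mul _).add
      ((integrable_norm_mul_of_integrable_sq_norm_mul hv hw hv₂).norm.const_mul _)).mono'
    (hw.aestronglyMeasurable.smul (hf'.continuous.comp_aestronglyMeasurable (hv.const_add x)))
    (ae_of_all _ fun u ↦ norm_smul_fderiv_comp_add_le hf' (x₀ := x) (by simp) (v u) (w u))

include hf in
theorem hasFDerivAt_integral_smul_comp_add (x₀ : E) :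
    HasFDerivAt (fun x ↦ ∫ u, w u • f (x + v u) ∂μ)
      (∫ u, w u • fderiv ℝ f (x₀ + v u) ∂μ) x₀ := by
  refine hasFDerivAt_integral_of_dominated_of_fderiv_le
    (F' := fun x u ↦ w u • fderiv ℝ f (x + v u)) (ball_mem_nhds x₀ one_pos)
    (.of_forall fun x ↦ (integrable_smul_comp_add hf hf' hv hw hv₂ x).aestronglyMeasurable)
    (integrable_smul_comp_add hf hf' hv hw hv₂ x₀)
    (integrable_smul_fderiv_comp_add hf' hv hw hv₂ x₀).aestronglyMeasurable
    (ae_of_all _ fun u x hx ↦ norm_smul_fderiv_comp_add_le hf' (x₀ := x₀) ?_ (v u) (w u))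
    ((hw.norm.const_mul _).add
      ((integrable_norm_mul_of_integrable_sq_norm_mul hv hw hv₂).norm.const_mul _))
    (ae_of_all _ fun u x _ ↦ ?_)
  · rw [mem_ball, dist_eq_norm] at hx
    exact hx.le
  · exact (((hf (x + v u)).hasFDerivAt.comp x ((hasFDerivAt_id x).add_const (v u))).const_smul
      (w u)).congr_fderiv (by ext; simp)

include hf in
theorem lipschitzWith_fderiv_integral_smul_comp_add (hw₁ : ∫ u, ‖w u‖ ∂μ ≤ 1) :
    LipschitzWith K (fderiv ℝ (fun x ↦ ∫ u, w u • f (x + v u) ∂μ)) := by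
  refine lipschitzWith_iff_norm_sub_le.2 fun x y ↦ ?_
  rw [(hasFDerivAt_integral_smul_comp_add hf hf' hv hw hv₂ x).fderiv,
    (hasFDerivAt_integral_smul_comp_add hf hf' hv hw hv₂ y).fderiv,
    ← integral_sub (integrable_smul_fderiv_comp_add hf' hv hw hv₂ x)
      (integrable_smul_fderiv_comp_add hf' hv hw hv₂ y)]
  calc ‖∫ u, (w u • fderiv ℝ f (x + v u) - w u • fderiv ℝ f (y + v u)) ∂μ‖
      ≤ ∫ u, ‖w u‖ * (K * ‖x - y‖) ∂μ := by
        refine norm_integral_le_of_norm_le (hw.norm.mul_const _) (ae_of_all _ fun u ↦ ?_)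
        rw [← smul_sub, norm_smul]
        gcongr
        simpa only [add_sub_add_right_eq_sub] using hf'.norm_sub_le (x + v u) (y + v u)
    _ = (∫ u, ‖w u‖ ∂μ) * (K * ‖x - y‖) := integral_mul_const _ _
    _ ≤ K * ‖x - y‖ := mul_le_of_le_one_left (by positivity) hw₁

end WeightedAverage

theorem mul_exp_neg_le_two_mul_exp_neg_half (t : ℝ) : t * exp (-t) ≤ 2 * exp (-(1 / 2) * t) := by
  have := add_one_le_exp (t / 2)
  calc t * exp (-t) ≤ 2 * exp (t / 2) * exp (-t) := by gcongr; linarith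
    _ = 2 * exp (-(1 / 2) * t) := by rw [mul_assoc, ← exp_add]; ring_nf

section Gaussian

variable (V : Type*) [NormedAddCommGroup V] [InnerProductSpace ℝ V]

noncomputable def gaussianDensity (u : V) : ℝ :=
  π ^ (-(finrank ℝ V : ℝ) / 2) * exp (-‖u‖ ^ 2)

theorem gaussianDensity_nonneg (u : V) : 0 ≤ gaussianDensity V u := by
  unfold gaussianDensity; positivity

variable {V} [FiniteDimensional ℝ V] [MeasurableSpace V] [BorelSpace V]

theorem integrable_exp_neg_mul_sq_norm {b : ℝ} (hb : 0 < b) :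
    Integrable (fun u : V ↦ exp (-b * ‖u‖ ^ 2)) :=
  Integrable.of_integral_ne_zero <| by
    rw [GaussianFourier.integral_rexp_neg_mul_sq_norm hb]; positivity

theorem integral_gaussianDensity : ∫ u, gaussianDensity V u = 1 := by
  have h := GaussianFourier.integral_rexp_neg_mul_sq_norm (V := V) one_pos
  simp only [neg_mul, one_mul, div_one] at h
  simp only [gaussianDensity]
  rw [integral_const_mul, h, neg_div, rpow_neg pi_pos.le, inv_mul_cancel₀ (by positivity)]

theorem integrable_gaussianDensity : Integrable (gaussianDensity V) :=
  Integrable.of_integral_ne_zero (by rw [integral_gaussianDensity]; exact one_ne_zero)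

theorem integrable_sq_norm_mul_exp_neg_sq_norm :
    Integrable (fun u : V ↦ ‖u‖ ^ 2 * exp (-‖u‖ ^ 2)) :=
  ((integrable_exp_neg_mul_sq_norm (b := 1 / 2) one_half_pos).const_mul 2).mono' (by fun_prop)
    (ae_of_all _ fun u ↦ by
      rw [Real.norm_of_nonneg (by positivity)]
      exact mul_exp_neg_le_two_mul_exp_neg_half _)

theorem integrable_sq_norm_mul_gaussianDensity :
    Integrable (fun u : V ↦ ‖u‖ ^ 2 * gaussianDensity V u) :=
  (integrable_sq_norm_mul_exp_neg_sq_norm.const_mul (π ^ (-(finrank ℝ V : ℝ) / 2))).congr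
    (ae_of_all _ fun u ↦ by simp only [gaussianDensity]; ring)

end Gaussian

theorem norm_gradient_sub_gradient {E : Type*} [NormedAddCommGroup E] [InnerProductSpace ℝ E]
    [CompleteSpace E] (f : E → ℝ) (x y : E) :
    ‖gradient f x - gradient f y‖ = ‖fderiv ℝ f x - fderiv ℝ f y‖ := by
  rw [← toDual_gradient, ← toDual_gradient, ← map_sub, LinearIsometryEquiv.norm_map]

theorem gsmooth_eq_integral {d : ℕ} (f : EuclideanSpace ℝ (Fin d) → ℝ) {σ : ℝ} (hσ : σ ≠ 0) :
    gsmooth f σ = fun x ↦ ∫ u, gaussianDensity _ u • f (x + σ • u) := by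
  ext x
  rw [gsmooth, if_neg hσ, ← integral_const_mul]
  congr 1 with u
  rw [gaussianDensity, finrank_euclideanSpace_fin, smul_eq_mul]
  ring

theorem gsmooth_lsmooth_general {d : ℕ} {L σ : ℝ} (hL : 0 < L) (hσ : 0 < σ)
    (f : EuclideanSpace ℝ (Fin d) → ℝ)
    (hdiff : Differentiable ℝ f)
    (hgrad : ∀ x y, ‖gradient f x - gradient f y‖ ≤ L * ‖x - y‖) :
    Differentiable ℝ (gsmooth f σ) ∧
      ∀ x y, ‖gradient (gsmooth f σ) x - gradient (gsmooth f σ) y‖ ≤ L * ‖x - y‖ := by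
  have hf' : LipschitzWith ⟨L, hL.le⟩ (fderiv ℝ f) :=
    lipschitzWith_iff_norm_sub_le.2 fun x y ↦ norm_gradient_sub_gradient f x y ▸ hgrad x y
  have hv : AEStronglyMeasurable (fun u : EuclideanSpace ℝ (Fin d) ↦ σ • u) :=
    (continuous_const_smul σ).aestronglyMeasurable
  have hv₂ : Integrable fun u : EuclideanSpace ℝ (Fin d) ↦ ‖σ • u‖ ^ 2 * gaussianDensity _ u := by
    simpa only [norm_smul, mul_pow, mul_assoc] using
      integrable_sq_norm_mul_gaussianDensity.const_mul (‖σ‖ ^ 2)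
  have hw₁ : ∫ u, ‖gaussianDensity (EuclideanSpace ℝ (Fin d)) u‖ ≤ 1 := by
    simp only [Real.norm_of_nonneg (gaussianDensity_nonneg _ _), integral_gaussianDensity, le_rfl]
  rw [gsmooth_eq_integral f hσ.ne']
  refine ⟨fun x ↦ (hasFDerivAt_integral_smul_comp_add hdiff hf' hv integrable_gaussianDensity hv₂
    x).differentiableAt, fun x y ↦ ?_⟩
  rw [norm_gradient_sub_gradient]
  exact (lipschitzWith_fderiv_integral_smul_comp_add hdiff hf' hv integrable_gaussianDensity hv₂
    hw₁).norm_sub_le x y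

/-- If `f` is `L`-smooth, then `f_σ` is `L`-smooth. -/
theorem gsmooth_lsmooth {d : ℕ} (hd : 1 ≤ d) {L σ : ℝ} (hL : 0 < L) (hσ : 0 < σ)
    (f : EuclideanSpace ℝ (Fin d) → ℝ)
    (hdiff : Differentiable ℝ f)
    (hgrad : ∀ x y, ‖gradient f x - gradient f y‖ ≤ L * ‖x - y‖) :
    Differentiable ℝ (gsmooth f σ) ∧
      ∀ x y, ‖gradient (gsmooth f σ) x - gradient (gsmooth f σ) y‖ ≤ L * ‖x - y‖ :=
  gsmooth_lsmooth_general hL hσ f hdiff hgrad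
end

section
/- Let d ≥ 1, σ > 0 and let f : ℝ^d → ℝ be continuous with m := inf_{y ∈ ℝ^d} f(y) > −∞. If there exists x ∈ ℝ^d such that f_σ(x) = m, then f is constant on ℝ^d. -/
open MeasureTheory
open scoped Classical

/-- Gaussian smoothing with values in `(−∞, +∞]` (for `f` bounded below):
the value is `+∞` when the defining integral is not finite. -/
noncomputable def gsmoothE {d : ℕ} (f : EuclideanSpace ℝ (Fin d) → ℝ) (σ : ℝ)
    (x : EuclideanSpace ℝ (Fin d)) : EReal :=
  if σ = 0 then (f x : EReal)
  else if Integrable (fun u : EuclideanSpace ℝ (Fin d) => f (x + σ • u) * Real.exp (-‖u‖ ^ 2)) then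
    ((Real.pi ^ (-(d : ℝ) / 2) *
      ∫ u : EuclideanSpace ℝ (Fin d), f (x + σ • u) * Real.exp (-‖u‖ ^ 2) : ℝ) : EReal)
  else ⊤

/-
A continuous function `g ≥ m` whose average against a positive weight equals `m` is identically
`m`, because `(g - m) w` is then a nonnegative function with zero integral. Applied to
`u ↦ f (x + σ u)` with the Gaussian weight (total mass `π^(d/2)`), the hypothesis
`f_σ(x) = inf f` forces `f = inf f` everywhere, since `u ↦ x + σ u` is onto.
-/

section GaussianWeight

variable {V : Type*} [NormedAddCommGroup V] [InnerProductSpace ℝ V] [FiniteDimensional ℝ V]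
  [MeasurableSpace V] [BorelSpace V]

lemma integral_exp_neg_norm_sq :
    ∫ v : V, Real.exp (-‖v‖ ^ 2) = Real.pi ^ (Module.finrank ℝ V / 2 : ℝ) := by
  simpa using GaussianFourier.integral_rexp_neg_mul_sq_norm (V := V) one_pos

lemma integrable_exp_neg_norm_sq : Integrable fun v : V => Real.exp (-‖v‖ ^ 2) :=
  Integrable.of_integral_ne_zero <| by
    rw [integral_exp_neg_norm_sq]; exact (Real.rpow_pos_of_pos Real.pi_pos _).ne'

end GaussianWeight

lemma eq_of_le_of_integral_mul_eq_mul_integral {X : Type*} [TopologicalSpace X] [T2Space X]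
    [MeasurableSpace X] [OpensMeasurableSpace X] {μ : Measure X} [μ.IsOpenPosMeasure]
    {g w : X → ℝ} {m : ℝ} (hg : Continuous g) (hw : ∀ x, 0 < w x) (hwi : Integrable w μ)
    (hgwi : Integrable (fun x => g x * w x) μ) (hm : ∀ x, m ≤ g x)
    (heq : ∫ x, g x * w x ∂μ = m * ∫ x, w x ∂μ) (x : X) : g x = m := by
  have hdefect_int : Integrable (fun x => (g x - m) * w x) μ := by
    simpa only [sub_mul, Pi.sub_def] using hgwi.sub (hwi.const_mul m)
  have hdefect_zero : ∫ x, (g x - m) * w x ∂μ = 0 := by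
    simp only [sub_mul]
    rw [integral_sub hgwi (hwi.const_mul m), integral_const_mul, heq, sub_self]
  have hdefect_ae : (fun x => (g x - m) * w x) =ᵐ[μ] 0 :=
    (integral_eq_zero_iff_of_nonneg (fun x => mul_nonneg (sub_nonneg.2 (hm x)) (hw x).le)
      hdefect_int).1 hdefect_zero
  have hg_ae : g =ᵐ[μ] fun _ => m := by
    filter_upwards [hdefect_ae] with x hx
    exact sub_eq_zero.1 ((mul_eq_zero.1 hx).resolve_right (hw x).ne')
  exact congrFun ((hg.ae_eq_iff_eq μ continuous_const).1 hg_ae) x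

lemma gsmoothE_eq_coe_iff {d : ℕ} {f : EuclideanSpace ℝ (Fin d) → ℝ} {σ : ℝ} (hσ : σ ≠ 0)
    {x : EuclideanSpace ℝ (Fin d)} {r : ℝ} :
    gsmoothE f σ x = r ↔
      Integrable (fun u : EuclideanSpace ℝ (Fin d) => f (x + σ • u) * Real.exp (-‖u‖ ^ 2)) ∧
      ∫ u : EuclideanSpace ℝ (Fin d), f (x + σ • u) * Real.exp (-‖u‖ ^ 2)
        = r * Real.pi ^ ((d : ℝ) / 2) := by
  have hpi : Real.pi ^ (-(d : ℝ) / 2) * Real.pi ^ ((d : ℝ) / 2) = 1 := by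
    rw [← Real.rpow_add Real.pi_pos, neg_div, neg_add_cancel, Real.rpow_zero]
  rw [gsmoothE, if_neg hσ]
  split_ifs with hI
  · rw [EReal.coe_eq_coe_iff, and_iff_right hI]
    constructor
    · intro h; rw [← h, mul_comm, ← mul_assoc, mul_comm _ (Real.pi ^ _), hpi, one_mul]
    · intro h; rw [h, mul_comm r, ← mul_assoc, hpi, one_mul]
  · simp [hI]

theorem gsmooth_eq_inf_imp_const_general {d : ℕ} {σ : ℝ} (hσ : 0 < σ)
    (f : EuclideanSpace ℝ (Fin d) → ℝ) (hcont : Continuous f)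
    (hbdd : BddBelow (Set.range f))
    (hx : ∃ x, gsmoothE f σ x = ((⨅ y, f y : ℝ) : EReal)) :
    ∀ x y, f x = f y := by
  obtain ⟨x₀, hx₀⟩ := hx
  obtain ⟨hint, heq⟩ := (gsmoothE_eq_coe_iff hσ.ne').1 hx₀
  have hshift_onto : Function.Surjective fun u : EuclideanSpace ℝ (Fin d) => x₀ + σ • u :=
    fun y => ⟨σ⁻¹ • (y - x₀), by simp [smul_smul, hσ.ne']⟩
  have hconst : ∀ u : EuclideanSpace ℝ (Fin d), f (x₀ + σ • u) = ⨅ y, f y :=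
    eq_of_le_of_integral_mul_eq_mul_integral (hcont.comp (by fun_prop))
      (fun u => Real.exp_pos _) integrable_exp_neg_norm_sq hint (fun u => ciInf_le hbdd _)
      (by rw [heq, integral_exp_neg_norm_sq, finrank_euclideanSpace_fin])
  intro x y
  obtain ⟨u, rfl⟩ := hshift_onto x
  obtain ⟨v, rfl⟩ := hshift_onto y
  rw [hconst, hconst]

/-- If `f` is continuous and bounded below with infimum `m`, and
`f_σ(x) = m` for some `x`, then `f` is constant. -/
theorem gsmooth_eq_inf_imp_const {d : ℕ} (hd : 1 ≤ d) {σ : ℝ} (hσ : 0 < σ)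
    (f : EuclideanSpace ℝ (Fin d) → ℝ) (hcont : Continuous f)
    (hbdd : BddBelow (Set.range f))
    (hx : ∃ x, gsmoothE f σ x = ((⨅ y, f y : ℝ) : EReal)) :
    ∀ x y, f x = f y :=
  gsmooth_eq_inf_imp_const_general hσ f hcont hbdd hx
end

section
/- Let d ≥ 1, L > 0, σ > 0, and let f : ℝ^d → ℝ be L-smooth and bounded below. Then f_σ is differentiable, and for every x ∈ ℝ^d and every i ∈ {1, …, d}: ∂f_σ/∂x_i(x) = π^{−d/2} ∫_{ℝ^d} (∂f/∂x_i)(x + σu) e^{−‖u‖²} du, and also ∂f_σ/∂x_i(x) = (2/(σ π^{d/2})) ∫_{ℝ^d} u_i f(x + σu) e^{−‖u‖²} du; equivalently ∇f_σ(x) = (2/(σ π^{d/2})) ∫_{ℝ^d} u f(x + σu) e^{−‖u‖²} du. -/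
/-!
Since `∇f` is `L`-Lipschitz, `f` grows at most quadratically and `Df` at most linearly, so every
integrand below is dominated by a polynomial times `e^{-‖u‖²}`. Hence one may differentiate under
the integral sign: `D_x ∫ f(x + σu) e^{-‖u‖²} du = ∫ Df(x + σu) e^{-‖u‖²} du`. Since
`D_u f(x + σu) = σ Df(x + σu)` and `∇ e^{-‖u‖²} = -2u e^{-‖u‖²}`, integrating by parts in `u`
(Stein's identity) turns this into `(2/σ) ∫ u f(x + σu) e^{-‖u‖²} du`.
-/

open MeasureTheory
open scoped Classical

open scoped NNReal Nat RealInnerProductSpace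

lemma LipschitzWith.norm_le_norm_zero_add_mul {E F : Type*} [SeminormedAddCommGroup E]
    [SeminormedAddCommGroup F] {K : ℝ≥0} {g : E → F} (hg : LipschitzWith K g) (z : E) :
    ‖g z‖ ≤ ‖g 0‖ + K * ‖z‖ := by
  have := hg.dist_le_mul z 0
  rw [dist_eq_norm, dist_zero_right] at this
  linarith [norm_le_insert' (g z) (g 0)]

lemma one_add_norm_add_smul_le {E : Type*} [NormedAddCommGroup E] [NormedSpace ℝ E]
    (x u : E) (σ : ℝ) : 1 + ‖x + σ • u‖ ≤ (1 + ‖x‖ + |σ|) * (1 + ‖u‖) := by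
  have := norm_add_le x (σ • u)
  rw [norm_smul, Real.norm_eq_abs] at this
  nlinarith [norm_nonneg x, norm_nonneg u, abs_nonneg σ]

lemma norm_comp_add_smul_le {E F : Type*} [NormedAddCommGroup E] [NormedSpace ℝ E]
    [NormedAddCommGroup F] {g : E → F} {C : ℝ} {n : ℕ} (hC : 0 ≤ C)
    (hg : ∀ z, ‖g z‖ ≤ C * (1 + ‖z‖) ^ n) (x u : E) (σ : ℝ) :
    ‖g (x + σ • u)‖ ≤ C * (1 + ‖x‖ + |σ|) ^ n * (1 + ‖u‖) ^ n := by
  calc ‖g (x + σ • u)‖ ≤ C * (1 + ‖x + σ • u‖) ^ n := hg _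
    _ ≤ C * ((1 + ‖x‖ + |σ|) * (1 + ‖u‖)) ^ n := by
        gcongr; exact one_add_norm_add_smul_le x u σ
    _ = _ := by rw [mul_pow, mul_assoc]

section Growth

variable {E F : Type*} [NormedAddCommGroup E] [NormedSpace ℝ E] [NormedAddCommGroup F]
  [NormedSpace ℝ F] {f : E → F} {K : ℝ≥0}

lemma norm_fderiv_le_of_lipschitzWith (hf' : LipschitzWith K (fderiv ℝ f)) (z : E) :
    ‖fderiv ℝ f z‖ ≤ (‖fderiv ℝ f 0‖ + K) * (1 + ‖z‖) ^ 1 := by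
  have := hf'.norm_le_norm_zero_add_mul z
  nlinarith [norm_nonneg (fderiv ℝ f 0), norm_nonneg z, K.coe_nonneg]

lemma norm_le_of_lipschitzWith_fderiv (hf : Differentiable ℝ f)
    (hf' : LipschitzWith K (fderiv ℝ f)) (z : E) :
    ‖f z‖ ≤ (‖f 0‖ + ‖fderiv ℝ f 0‖ + K) * (1 + ‖z‖) ^ 2 := by
  have hderiv : ∀ y ∈ Metric.closedBall (0 : E) ‖z‖, ‖fderiv ℝ f y‖ ≤ ‖fderiv ℝ f 0‖ + K * ‖z‖ :=
    fun y hy => (hf'.norm_le_norm_zero_add_mul y).trans (by gcongr; simpa using hy)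
  have hmvt := (convex_closedBall (0 : E) ‖z‖).norm_image_sub_le_of_norm_fderiv_le
    (fun y _ => hf y) hderiv (Metric.mem_closedBall_self (norm_nonneg z)) (y := z) (by simp)
  rw [sub_zero] at hmvt
  have hz := norm_nonneg z
  calc ‖f z‖ ≤ ‖f 0‖ + (‖fderiv ℝ f 0‖ + K * ‖z‖) * ‖z‖ := by
        linarith [norm_le_insert' (f z) (f 0)]
    _ ≤ _ := by
        nlinarith [mul_nonneg (norm_nonneg (f 0)) hz, mul_nonneg (norm_nonneg (fderiv ℝ f 0)) hz,
          mul_nonneg K.coe_nonneg hz, norm_nonneg (f 0), norm_nonneg (fderiv ℝ f 0), K.coe_nonneg]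

lemma norm_exp_smul_fderiv_comp_add_smul_le (hf' : LipschitzWith K (fderiv ℝ f)) (x u : E)
    (σ : ℝ) :
    ‖Real.exp (-‖u‖ ^ 2) • fderiv ℝ f (x + σ • u)‖ ≤
      (‖fderiv ℝ f 0‖ + K) * (1 + ‖x‖ + |σ|) * ((1 + ‖u‖) ^ 1 * Real.exp (-‖u‖ ^ 2)) := by
  have hbound := norm_comp_add_smul_le (by positivity) (norm_fderiv_le_of_lipschitzWith hf') x u σ
  rw [norm_smul, Real.norm_of_nonneg (Real.exp_pos _).le]
  exact (mul_le_mul_of_nonneg_left hbound (Real.exp_pos _).le).trans_eq (by ring)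

end Growth

lemma one_add_pow_mul_exp_neg_sq_le (n : ℕ) {t : ℝ} (ht : 0 ≤ t) :
    (1 + t) ^ n * Real.exp (-t ^ 2) ≤ n ! * Real.exp (3 / 2) * Real.exp (-(1 / 2) * t ^ 2) := by
  have hpow : (1 + t) ^ n ≤ n ! * Real.exp (1 + t) := by
    have := Real.pow_div_factorial_le_exp (1 + t) (by linarith) n
    rwa [div_le_iff₀ (by positivity), mul_comm] at this
  calc (1 + t) ^ n * Real.exp (-t ^ 2) ≤ n ! * Real.exp (1 + t) * Real.exp (-t ^ 2) := by gcongr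
    _ = n ! * Real.exp (1 + t - t ^ 2) := by rw [mul_assoc, ← Real.exp_add]; ring_nf
    _ ≤ n ! * Real.exp (3 / 2 + -(1 / 2) * t ^ 2) := by
        gcongr; nlinarith [sq_nonneg (t - 1)]
    _ = _ := by rw [Real.exp_add, mul_assoc]

lemma hasFDerivAt_exp_neg_sq_norm {V : Type*} [NormedAddCommGroup V] [InnerProductSpace ℝ V]
    (u : V) :
    HasFDerivAt (fun u : V => Real.exp (-‖u‖ ^ 2)) ((-2 * Real.exp (-‖u‖ ^ 2)) • innerSL ℝ u) u :=
  (hasStrictFDerivAt_norm_sq u).hasFDerivAt.neg.exp.congr_fderiv <| by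
    ext w
    simp only [Pi.neg_apply, neg_apply, smul_apply, coe_innerSL_apply, nsmul_eq_mul,
      Nat.cast_ofNat, smul_eq_mul]
    ring

lemma lipschitzWith_fderiv_of_norm_gradient_sub_le {V : Type*} [NormedAddCommGroup V]
    [InnerProductSpace ℝ V] [CompleteSpace V] {f : V → ℝ} {L : ℝ}
    (h : ∀ x y, ‖gradient f x - gradient f y‖ ≤ L * ‖x - y‖) :
    LipschitzWith (Real.toNNReal L) (fderiv ℝ f) := by
  refine .of_dist_le_mul fun x y => ?_
  rw [← toDual_gradient, ← toDual_gradient, LinearIsometryEquiv.dist_map, dist_eq_norm,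
    dist_eq_norm]
  exact (h x y).trans (by gcongr; exact Real.le_coe_toNNReal L)

lemma HasGradientAt.const_mul {V : Type*} [NormedAddCommGroup V] [InnerProductSpace ℝ V]
    [CompleteSpace V] {g : V → ℝ} {w x : V} (hg : HasGradientAt g w x) (c : ℝ) :
    HasGradientAt (fun y => c * g y) (c • w) x := by
  rw [hasGradientAt_iff_hasFDerivAt, map_smul]
  exact (hasGradientAt_iff_hasFDerivAt.1 hg).const_mul c

section Gaussian

variable {V : Type*} [NormedAddCommGroup V] [InnerProductSpace ℝ V] [FiniteDimensional ℝ V]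
  [MeasurableSpace V] [BorelSpace V]

lemma integrable_one_add_norm_pow_mul_exp_neg_sq_norm (n : ℕ) :
    Integrable (fun u : V => (1 + ‖u‖) ^ n * Real.exp (-‖u‖ ^ 2)) := by
  have hgauss : Integrable (fun u : V => Real.exp (-(1 / 2) * ‖u‖ ^ 2)) :=
    .of_integral_ne_zero <| by
      rw [GaussianFourier.integral_rexp_neg_mul_sq_norm (by norm_num)]; positivity
  refine (hgauss.const_mul (n ! * Real.exp (3 / 2))).mono' (by fun_prop) (ae_of_all _ fun u => ?_)
  rw [Real.norm_of_nonneg (by positivity)]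
  exact one_add_pow_mul_exp_neg_sq_le n (norm_nonneg u)

lemma MeasureTheory.Integrable.of_norm_le_one_add_norm_pow_mul_exp {F : Type*}
    [NormedAddCommGroup F] {g : V → F} (hg : AEStronglyMeasurable g) {C : ℝ} {n : ℕ}
    (hgC : ∀ u, ‖g u‖ ≤ C * ((1 + ‖u‖) ^ n * Real.exp (-‖u‖ ^ 2))) : Integrable g :=
  ((integrable_one_add_norm_pow_mul_exp_neg_sq_norm n).const_mul C).mono' hg (ae_of_all _ hgC)

end Gaussian

section GaussIntegral

variable {V : Type*} [NormedAddCommGroup V] [InnerProductSpace ℝ V] [FiniteDimensional ℝ V]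
  [MeasurableSpace V] [BorelSpace V] {f : V → ℝ} {K : ℝ≥0}

noncomputable def gaussIntegral (f : V → ℝ) (σ : ℝ) (x : V) : ℝ :=
  ∫ u, f (x + σ • u) * Real.exp (-‖u‖ ^ 2)

lemma integrable_comp_add_smul_mul_exp (hf : Differentiable ℝ f)
    (hf' : LipschitzWith K (fderiv ℝ f)) (x : V) (σ : ℝ) :
    Integrable (fun u => f (x + σ • u) * Real.exp (-‖u‖ ^ 2)) := by
  have hbound := norm_comp_add_smul_le (by positivity) (norm_le_of_lipschitzWith_fderiv hf hf') x
  have := hf.continuous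
  refine .of_norm_le_one_add_norm_pow_mul_exp (n := 2)
    (C := (‖f 0‖ + ‖fderiv ℝ f 0‖ + K) * (1 + ‖x‖ + |σ|) ^ 2) (by fun_prop) fun u => ?_
  rw [norm_mul, Real.norm_of_nonneg (Real.exp_pos _).le]
  exact (mul_le_mul_of_nonneg_right (hbound u σ) (Real.exp_pos _).le).trans_eq (by ring)

lemma integrable_comp_add_smul_mul_exp_smul (hf : Differentiable ℝ f)
    (hf' : LipschitzWith K (fderiv ℝ f)) (x : V) (σ : ℝ) :
    Integrable (fun u => (f (x + σ • u) * Real.exp (-‖u‖ ^ 2)) • u) := by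
  have hbound := norm_comp_add_smul_le (by positivity) (norm_le_of_lipschitzWith_fderiv hf hf') x
  have := hf.continuous
  refine .of_norm_le_one_add_norm_pow_mul_exp (n := 3)
    (C := (‖f 0‖ + ‖fderiv ℝ f 0‖ + K) * (1 + ‖x‖ + |σ|) ^ 2) (by fun_prop) fun u => ?_
  rw [norm_smul, norm_mul, Real.norm_of_nonneg (Real.exp_pos _).le]
  calc ‖f (x + σ • u)‖ * Real.exp (-‖u‖ ^ 2) * ‖u‖
      ≤ (‖f 0‖ + ‖fderiv ℝ f 0‖ + K) * (1 + ‖x‖ + |σ|) ^ 2 * (1 + ‖u‖) ^ 2 *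
          Real.exp (-‖u‖ ^ 2) * (1 + ‖u‖) := by
        gcongr
        · exact hbound u σ
        · linarith
    _ = _ := by ring

lemma integrable_exp_smul_fderiv_comp_add_smul (hf' : LipschitzWith K (fderiv ℝ f))
    (x : V) (σ : ℝ) :
    Integrable (fun u => Real.exp (-‖u‖ ^ 2) • fderiv ℝ f (x + σ • u)) := by
  have := hf'.continuous
  exact .of_norm_le_one_add_norm_pow_mul_exp (by fun_prop)
    (norm_exp_smul_fderiv_comp_add_smul_le hf' x · σ)

theorem hasFDerivAt_gaussIntegral (hf : Differentiable ℝ f)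
    (hf' : LipschitzWith K (fderiv ℝ f)) (σ : ℝ) (x₀ : V) :
    HasFDerivAt (gaussIntegral f σ)
      (∫ u, Real.exp (-‖u‖ ^ 2) • fderiv ℝ f (x₀ + σ • u)) x₀ := by
  have := hf.continuous
  have := hf'.continuous
  refine hasFDerivAt_integral_of_dominated_of_fderiv_le
    (F := fun x u => f (x + σ • u) * Real.exp (-‖u‖ ^ 2))
    (F' := fun x u => Real.exp (-‖u‖ ^ 2) • fderiv ℝ f (x + σ • u))
    (Metric.ball_mem_nhds x₀ one_pos) (.of_forall fun x => by fun_prop)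
    (integrable_comp_add_smul_mul_exp hf hf' x₀ σ) (by fun_prop) (ae_of_all _ fun u x hx => ?_)
    ((integrable_one_add_norm_pow_mul_exp_neg_sq_norm 1).const_mul
      ((‖fderiv ℝ f 0‖ + K) * (2 + ‖x₀‖ + |σ|)))
    (ae_of_all _ fun u x _ => ?_)
  · refine (norm_exp_smul_fderiv_comp_add_smul_le hf' x u σ).trans ?_
    have : ‖x‖ ≤ ‖x₀‖ + 1 := by
      linarith [norm_le_insert' x x₀, (mem_ball_iff_norm.1 hx).le]
    gcongr _ * ?_ * _
    linarith
  · simpa using ((hf _).hasFDerivAt.comp x ((hasFDerivAt_id x).add_const (σ • u))).mul_const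
      (Real.exp (-‖u‖ ^ 2))

theorem integral_fderiv_comp_add_smul_mul_exp (hf : Differentiable ℝ f)
    (hf' : LipschitzWith K (fderiv ℝ f)) {σ : ℝ} (hσ : σ ≠ 0) (x v : V) :
    ∫ u, fderiv ℝ f (x + σ • u) v * Real.exp (-‖u‖ ^ 2) =
      2 / σ * ∫ u, ⟪u, v⟫ * f (x + σ • u) * Real.exp (-‖u‖ ^ 2) := by
  have hF (u : V) : HasFDerivAt (fun u => f (x + σ • u)) (σ • fderiv ℝ f (x + σ • u)) u :=
    ((hf _).hasFDerivAt.comp u (((hasFDerivAt_id u).const_smul σ).const_add x)).congr_fderiv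
      (by ext w; simp)
  have hFd : fderiv ℝ (fun u => f (x + σ • u)) = fun u => σ • fderiv ℝ f (x + σ • u) :=
    funext fun u => (hF u).fderiv
  have hGd : fderiv ℝ (fun u : V => Real.exp (-‖u‖ ^ 2)) =
      fun u => (-2 * Real.exp (-‖u‖ ^ 2)) • innerSL ℝ u :=
    funext fun u => (hasFDerivAt_exp_neg_sq_norm u).fderiv
  have ibp := integral_mul_fderiv_eq_neg_fderiv_mul_of_integrable (μ := volume) (v := v)
    (f := fun u => f (x + σ • u)) (g := fun u : V => Real.exp (-‖u‖ ^ 2))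
    (by
      rw [hFd]
      refine (((integrable_exp_smul_fderiv_comp_add_smul hf' x σ).apply_continuousLinearMap
        v).const_mul σ).congr (ae_of_all _ fun u => ?_)
      simp only [smul_apply, smul_eq_mul]; ring)
    (by
      rw [hGd]
      refine (((integrable_comp_add_smul_mul_exp_smul hf hf' x σ).inner_const v).const_mul
        (-2)).congr (ae_of_all _ fun u => ?_)
      simp only [smul_apply, coe_innerSL_apply, smul_eq_mul, real_inner_smul_right, real_inner_comm]
      ring)
    (integrable_comp_add_smul_mul_exp hf hf' x σ)
    (fun u _ => (hF u).differentiableAt)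
    (fun u _ => (hasFDerivAt_exp_neg_sq_norm u).differentiableAt)
  rw [hFd, hGd] at ibp
  simp only [neg_mul, neg_smul, neg_apply, smul_apply, coe_innerSL_apply, smul_eq_mul,
    mul_neg] at ibp
  have hl (u : V) : -(f (x + σ • u) * (2 * Real.exp (-‖u‖ ^ 2) * ⟪u, v⟫)) =
      -2 * (⟪u, v⟫ * f (x + σ • u) * Real.exp (-‖u‖ ^ 2)) := by ring
  simp only [hl, mul_assoc σ, integral_const_mul] at ibp
  field_simp
  linarith

lemma fderiv_gaussIntegral_apply (hf : Differentiable ℝ f) (hf' : LipschitzWith K (fderiv ℝ f))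
    (σ : ℝ) (x v : V) :
    fderiv ℝ (gaussIntegral f σ) x v = ∫ u, fderiv ℝ f (x + σ • u) v * Real.exp (-‖u‖ ^ 2) := by
  rw [(hasFDerivAt_gaussIntegral hf hf' σ x).fderiv,
    ContinuousLinearMap.integral_apply (integrable_exp_smul_fderiv_comp_add_smul hf' x σ)]
  simp only [smul_apply, smul_eq_mul, mul_comm]

theorem hasGradientAt_gaussIntegral (hf : Differentiable ℝ f)
    (hf' : LipschitzWith K (fderiv ℝ f)) {σ : ℝ} (hσ : σ ≠ 0) (x : V) :
    HasGradientAt (gaussIntegral f σ)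
      ((2 / σ) • ∫ u, (f (x + σ • u) * Real.exp (-‖u‖ ^ 2)) • u) x := by
  have hD := hasFDerivAt_gaussIntegral hf hf' σ x
  rw [hasGradientAt_iff_hasFDerivAt]
  refine hD.congr_fderiv (ContinuousLinearMap.ext fun v => ?_)
  rw [← hD.fderiv, fderiv_gaussIntegral_apply hf hf',
    integral_fderiv_comp_add_smul_mul_exp hf hf' hσ, InnerProductSpace.toDual_apply_apply,
    real_inner_smul_left, real_inner_comm,
    ← integral_inner (integrable_comp_add_smul_mul_exp_smul hf hf' x σ)]
  congr 2 with u
  rw [real_inner_smul_right, real_inner_comm]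
  ring

end GaussIntegral

lemma EuclideanSpace.gradient_apply {ι : Type*} [Fintype ι] [DecidableEq ι]
    (g : EuclideanSpace ℝ ι → ℝ) (x : EuclideanSpace ℝ ι) (i : ι) :
    gradient g x i = fderiv ℝ g x (EuclideanSpace.single i 1) := by
  rw [← inner_gradient_left, EuclideanSpace.inner_single_right, one_mul, conj_trivial]

theorem gsmooth_gradient_formula_general {d : ℕ} {L σ : ℝ} (hσ : 0 < σ)
    (f : EuclideanSpace ℝ (Fin d) → ℝ)
    (hdiff : Differentiable ℝ f)
    (hgrad : ∀ x y, ‖gradient f x - gradient f y‖ ≤ L * ‖x - y‖) :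
    Differentiable ℝ (gsmooth f σ) ∧
    (∀ x, ∀ i : Fin d,
      gradient (gsmooth f σ) x i =
        Real.pi ^ (-(d : ℝ) / 2) *
          ∫ u : EuclideanSpace ℝ (Fin d), gradient f (x + σ • u) i * Real.exp (-‖u‖ ^ 2) ∧
      gradient (gsmooth f σ) x i =
        2 / (σ * Real.pi ^ ((d : ℝ) / 2)) *
          ∫ u : EuclideanSpace ℝ (Fin d), u i * f (x + σ • u) * Real.exp (-‖u‖ ^ 2)) ∧
    (∀ x, gradient (gsmooth f σ) x =
      (2 / (σ * Real.pi ^ ((d : ℝ) / 2))) •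
        ∫ u : EuclideanSpace ℝ (Fin d), (f (x + σ • u) * Real.exp (-‖u‖ ^ 2)) • u) := by
  have hf' := lipschitzWith_fderiv_of_norm_gradient_sub_le hgrad
  set c := Real.pi ^ (-(d : ℝ) / 2)
  have hgs : gsmooth f σ = fun x => c * gaussIntegral f σ x := funext fun x => if_neg hσ.ne'
  have hc : c * (2 / σ) = 2 / (σ * Real.pi ^ ((d : ℝ) / 2)) := by
    simp only [c, neg_div, Real.rpow_neg Real.pi_pos.le]
    field_simp
  have hD (x) : HasFDerivAt (gsmooth f σ) (c • fderiv ℝ (gaussIntegral f σ) x) x :=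
    hgs ▸ (hasFDerivAt_gaussIntegral hdiff hf' σ x).differentiableAt.hasFDerivAt.const_mul c
  have hcoord (x) (i : Fin d) : gradient (gsmooth f σ) x i =
      c * ∫ u, fderiv ℝ f (x + σ • u) (EuclideanSpace.single i 1) * Real.exp (-‖u‖ ^ 2) := by
    rw [EuclideanSpace.gradient_apply, (hD x).fderiv, smul_apply,
      fderiv_gaussIntegral_apply hdiff hf', smul_eq_mul]
  refine ⟨fun x => (hD x).differentiableAt, fun x i => ⟨?_, ?_⟩, fun x => ?_⟩
  · simp only [hcoord, EuclideanSpace.gradient_apply]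
  · rw [hcoord, integral_fderiv_comp_add_smul_mul_exp hdiff hf' hσ.ne', ← mul_assoc, hc]
    simp only [EuclideanSpace.inner_single_right, one_mul, conj_trivial]
  · rw [hgs, ((hasGradientAt_gaussIntegral hdiff hf' hσ.ne' x).const_mul c).gradient, smul_smul,
      hc]

/-- If `f` is `L`-smooth and bounded below, then `f_σ` is differentiable and
its partial derivatives are given both by smoothing `∂f/∂x_i` and by the formula
`∇f_σ(x) = (2/(σ π^(d/2))) ∫ u f(x + σu) e^(−‖u‖²) du`. -/
theorem gsmooth_gradient_formula {d : ℕ} (hd : 1 ≤ d) {L σ : ℝ} (hL : 0 < L) (hσ : 0 < σ)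
    (f : EuclideanSpace ℝ (Fin d) → ℝ)
    (hdiff : Differentiable ℝ f)
    (hgrad : ∀ x y, ‖gradient f x - gradient f y‖ ≤ L * ‖x - y‖)
    (hbdd : BddBelow (Set.range f)) :
    Differentiable ℝ (gsmooth f σ) ∧
    (∀ x, ∀ i : Fin d,
      gradient (gsmooth f σ) x i =
        Real.pi ^ (-(d : ℝ) / 2) *
          ∫ u : EuclideanSpace ℝ (Fin d), gradient f (x + σ • u) i * Real.exp (-‖u‖ ^ 2) ∧
      gradient (gsmooth f σ) x i =
        2 / (σ * Real.pi ^ ((d : ℝ) / 2)) *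
          ∫ u : EuclideanSpace ℝ (Fin d), u i * f (x + σ • u) * Real.exp (-‖u‖ ^ 2)) ∧
    (∀ x, gradient (gsmooth f σ) x =
      (2 / (σ * Real.pi ^ ((d : ℝ) / 2))) •
        ∫ u : EuclideanSpace ℝ (Fin d), (f (x + σ • u) * Real.exp (-‖u‖ ^ 2)) • u) :=
  gsmooth_gradient_formula_general hσ f hdiff hgrad
end
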